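/- Let k ≥ 3 and let G be the graph on 2k vertices {v, v_1, …, v_k, u_1, …, u_{k−1}} with edges vv_i for 1 ≤ i ≤ k, v_iu_i for 1 ≤ i ≤ k−1, v_ku_{k−1}, and u_iu_j for all 1 ≤ i < j ≤ k−1. Then both G and its complement have diameter 2. -/

import Mathlib

open SimpleGraph

/-- A coloring `c` (using colors `< k`) makes `G` rainbow vertex-connected: every pair of
vertices is joined by a path whose internal vertices receive distinct colors (all `< k`). -/
def IsRainbowVCColoring {V : Type*} (G : SimpleGraph V) (c : V → ℕ) (k : ℕ) : Prop :=
  ∀ u v : V, ∃ p : G.Walk u v, p.IsPath ∧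
    (p.support.tail.dropLast.map c).Nodup ∧
    ∀ x ∈ p.support.tail.dropLast, c x < k

/-- The rainbow vertex-connection number: the least number of colors making `G`
rainbow vertex-connected. -/
noncomputable def rvc {V : Type*} (G : SimpleGraph V) : ℕ :=
  sInf {k | ∃ c : V → ℕ, IsRainbowVCColoring G c k}

/-- The graph on `2k` vertices: hub `none`, vertices `v_i = some (inl i)` for `i : Fin k`,
`u_j = some (inr j)` for `j : Fin (k-1)`; edges `v v_i`; `v_i u_i` for `i ≤ k-2` together
with `v_{k-1} u_{k-2}` (0-indexed); and `u_i u_j` for `i ≠ j`. -/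
def evenExample (k : ℕ) : SimpleGraph (Option (Fin k ⊕ Fin (k - 1))) :=
  SimpleGraph.fromRel (fun x y =>
    match x, y with
    | none, some (Sum.inl _) => True
    | some (Sum.inl i), some (Sum.inr j) =>
        (i : ℕ) = (j : ℕ) ∨ ((i : ℕ) = k - 1 ∧ (j : ℕ) = k - 2)
    | some (Sum.inr _), some (Sum.inr _) => True
    | _, _ => False)

/-
Neither graph is complete, so it suffices to join any two vertices by a path of length at most
two. In `G` the middle vertex is the hub `v`, some `v_j` or some `u_m`; in the complement it is
`v`, or a `v_m` or `u_m` with `m ∈ {0, 1}` chosen different from the given index and equal to `0`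
when that index is `k - 1`, which keeps clear of the exceptional edge `v_{k-1} u_{k-2}`.
-/

namespace SimpleGraph

variable {V : Type*} {G : SimpleGraph V} {u v w : V}

lemma Adj.edist_le_two (h : G.Adj u v) : G.edist u v ≤ 2 :=
  (edist_eq_one_iff_adj.2 h).trans_le one_le_two

lemma edist_le_two_of_adj_of_adj (huw : G.Adj u w) (hwv : G.Adj w v) : G.edist u v ≤ 2 :=
  (Walk.cons huw (.cons hwv .nil)).edist_le

lemma diam_eq_two_of_ediam_le_two (h : G.ediam ≤ 2) (huv : u ≠ v) (hnadj : ¬G.Adj u v) :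
    G.diam = 2 := by
  have h1 : 1 < G.edist u v :=
    not_le.1 fun h ↦ (edist_le_one_iff_adj_or_eq.1 h).elim hnadj huv
  have : G.ediam = 2 := le_antisymm h ((Order.add_one_le_of_lt h1).trans edist_le_ediam)
  simp [diam, this]

end SimpleGraph

section evenExample

variable {k : ℕ}

@[simp] lemma evenExample_adj_none_inl (i : Fin k) :
    (evenExample k).Adj none (some (.inl i)) := by
  simp [evenExample]

@[simp] lemma evenExample_not_adj_none_inr (j : Fin (k - 1)) :
    ¬(evenExample k).Adj none (some (.inr j)) := by
  simp [evenExample]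

@[simp] lemma evenExample_not_adj_inr_none (j : Fin (k - 1)) :
    ¬(evenExample k).Adj (some (.inr j)) none :=
  fun h ↦ evenExample_not_adj_none_inr j h.symm

@[simp] lemma evenExample_not_adj_inl_inl (i i' : Fin k) :
    ¬(evenExample k).Adj (some (.inl i)) (some (.inl i')) := by
  simp [evenExample]

@[simp] lemma evenExample_adj_inl_inr {i : Fin k} {j : Fin (k - 1)} :
    (evenExample k).Adj (some (.inl i)) (some (.inr j)) ↔
      (i : ℕ) = j ∨ (i : ℕ) = k - 1 ∧ (j : ℕ) = k - 2 := by
  simp [evenExample]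

@[simp] lemma evenExample_adj_inr_inr {j j' : Fin (k - 1)} :
    (evenExample k).Adj (some (.inr j)) (some (.inr j')) ↔ j ≠ j' := by
  simp [evenExample]

lemma evenExample_edist_none_inr_le_two (j : Fin (k - 1)) :
    (evenExample k).edist none (some (.inr j)) ≤ 2 :=
  edist_le_two_of_adj_of_adj (evenExample_adj_none_inl ⟨j, by omega⟩)
    (evenExample_adj_inl_inr.2 (.inl rfl))

lemma evenExample_edist_inl_inr_le_two (i : Fin k) (j : Fin (k - 1)) :
    (evenExample k).edist (some (.inl i)) (some (.inr j)) ≤ 2 := by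
  by_cases hadj : (evenExample k).Adj (some (.inl i)) (some (.inr j))
  · exact hadj.edist_le_two
  rw [evenExample_adj_inl_inr, not_or] at hadj
  by_cases hi : (i : ℕ) = k - 1
  · refine edist_le_two_of_adj_of_adj (w := some (.inr ⟨k - 2, by omega⟩)) ?_ ?_
    · simp [hi]
    · simp [Fin.ext_iff]
      omega
  · refine edist_le_two_of_adj_of_adj (w := some (.inr ⟨i, by omega⟩)) ?_ ?_
    · simp
    · simp [Fin.ext_iff]
      omega

lemma evenExample_ediam_le_two : (evenExample k).ediam ≤ 2 := by
  refine ediam_le_of_edist_le ?_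
  rintro (_ | i | j) (_ | i' | j')
  · simp
  · exact (evenExample_adj_none_inl i').edist_le_two
  · exact evenExample_edist_none_inr_le_two j'
  · exact (evenExample_adj_none_inl i).symm.edist_le_two
  · exact edist_le_two_of_adj_of_adj (evenExample_adj_none_inl i).symm
      (evenExample_adj_none_inl i')
  · exact evenExample_edist_inl_inr_le_two i j'
  · rw [SimpleGraph.edist_comm]
    exact evenExample_edist_none_inr_le_two j
  · rw [SimpleGraph.edist_comm]
    exact evenExample_edist_inl_inr_le_two i' j
  · obtain rfl | hjj := eq_or_ne j j'
    · simp
    · exact (evenExample_adj_inr_inr.2 hjj).edist_le_two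

lemma exists_lt_two_ne_of_two_le (hk : 2 ≤ k) (i : Fin k) :
    ∃ m < 2, m ≠ (i : ℕ) ∧ ((i : ℕ) = k - 1 → m = 0) :=
  ⟨if (i : ℕ) = 0 then 1 else 0, by split_ifs <;> omega, by split_ifs <;> omega,
    by split_ifs <;> omega⟩

lemma evenExample_compl_edist_none_inl_le_two (hk : 3 ≤ k) (i : Fin k) :
    (evenExample k)ᶜ.edist none (some (.inl i)) ≤ 2 := by
  obtain ⟨m, hm, hmi, hlast⟩ := exists_lt_two_ne_of_two_le (by omega) i
  refine edist_le_two_of_adj_of_adj (w := some (.inr ⟨m, by omega⟩)) (by simp [compl_adj]) ?_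
  refine Adj.symm ((compl_adj _ _ _).2 ⟨by simp, ?_⟩)
  simp only [evenExample_adj_inl_inr]
  omega

lemma evenExample_compl_edist_inl_inr_le_two (hk : 3 ≤ k) (i : Fin k) (j : Fin (k - 1)) :
    (evenExample k)ᶜ.edist (some (.inl i)) (some (.inr j)) ≤ 2 := by
  by_cases hcadj : (evenExample k)ᶜ.Adj (some (.inl i)) (some (.inr j))
  · exact hcadj.edist_le_two
  have hadj : (i : ℕ) = j ∨ (i : ℕ) = k - 1 ∧ (j : ℕ) = k - 2 := by
    simpa [compl_adj, or_iff_not_imp_left] using hcadj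
  obtain ⟨m, hm, hmi, hlast⟩ := exists_lt_two_ne_of_two_le (by omega) i
  refine edist_le_two_of_adj_of_adj (w := some (.inl ⟨m, by omega⟩)) ?_ ?_
  · simp [compl_adj, Fin.ext_iff]
    omega
  · simp [compl_adj]
    omega

lemma evenExample_compl_ediam_le_two (hk : 3 ≤ k) : (evenExample k)ᶜ.ediam ≤ 2 := by
  refine ediam_le_of_edist_le ?_
  rintro (_ | i | j) (_ | i' | j')
  · simp
  · exact evenExample_compl_edist_none_inl_le_two hk i'
  · exact Adj.edist_le_two (by simp [compl_adj])
  · rw [SimpleGraph.edist_comm]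
    exact evenExample_compl_edist_none_inl_le_two hk i
  · obtain rfl | hii := eq_or_ne i i'
    · simp
    · exact Adj.edist_le_two (by simp [compl_adj, hii])
  · exact evenExample_compl_edist_inl_inr_le_two hk i j'
  · exact Adj.edist_le_two (by simp [compl_adj])
  · rw [SimpleGraph.edist_comm]
    exact evenExample_compl_edist_inl_inr_le_two hk i' j
  · exact edist_le_two_of_adj_of_adj (w := none) (by simp [compl_adj]) (by simp [compl_adj])

end evenExample

theorem evenExample_diam (k : ℕ) (hk : 3 ≤ k) :
    (evenExample k).diam = 2 ∧ (evenExample k)ᶜ.diam = 2 :=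
  ⟨diam_eq_two_of_ediam_le_two evenExample_ediam_le_two (u := none)
      (v := some (.inr ⟨0, by omega⟩)) (by simp) (by simp),
    diam_eq_two_of_ediam_le_two (evenExample_compl_ediam_le_two hk) (u := none)
      (v := some (.inl ⟨0, by omega⟩)) (by simp) (by simp [compl_adj])⟩
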